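/- arXiv:1302.5244 — 7 statements merged into one kernel-verified Lean document; each statement's English description precedes it below -/
import Mathlib

section
/- If the points a₁, …, a_m in ℝⁿ do not all lie on a single line, then the function φ(x) = Σᵢ ‖x - aᵢ‖ is strictly convex. -/
theorem stmt_2 (n m : ℕ) (a : Fin m → EuclideanSpace ℝ (Fin n))
    (h : ¬ Collinear ℝ (Set.range a)) :
    StrictConvexOn ℝ Set.univ (fun x : EuclideanSpace ℝ (Fin n) => ∑ i, ‖x - a i‖) := by
  refine ⟨convex_univ, fun x _ y _ hxy p q hp hq hpq => ?_⟩
  obtain ⟨i₀, hi₀⟩ : ∃ i, ¬ SameRay ℝ (x - a i) (y - a i) := by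
    by_contra hc
    push_neg at hc
    apply h
    rw [collinear_iff_exists_forall_eq_smul_vadd]
    refine ⟨x, y - x, ?_⟩
    rintro _ ⟨i, rfl⟩
    rcases hc i with h0 | h0 | ⟨r₁, r₂, hr₁, hr₂, hr⟩
    · exact ⟨0, by rw [sub_eq_zero] at h0; simp [← h0]⟩
    · exact ⟨1, by rw [sub_eq_zero] at h0; simp [← h0]⟩
    · have hne : r₂ - r₁ ≠ 0 := by
        intro hrr
        have : r₁ = r₂ := by linarith [sub_eq_zero.mp hrr]
        subst this
        apply hxy
        have := hr
        rw [smul_sub, smul_sub] at this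
        have hx' : r₁ • x = r₁ • y := by
          have := sub_eq_sub_iff_add_eq_add.mp this
          linear_combination (norm := module) this
        have := smul_right_injective (EuclideanSpace ℝ (Fin n)) (ne_of_gt hr₁) hx'
        exact this
      refine ⟨r₂ / (r₂ - r₁), ?_⟩
      have key : (r₂ - r₁) • (a i) = r₂ • y - r₁ • x := by
        rw [smul_sub, smul_sub] at hr
        linear_combination (norm := module) hr
      have : (r₂ - r₁) • (a i) = (r₂ - r₁) • ((r₂ / (r₂ - r₁)) • (y - x) +ᵥ x) := by
        rw [key]
        have : (r₂ - r₁) • ((r₂ / (r₂ - r₁)) • (y - x) +ᵥ x)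
            = ((r₂ - r₁) * (r₂ / (r₂ - r₁))) • (y - x) + (r₂ - r₁) • x := by
          simp [smul_add, smul_smul]
        rw [this, mul_div_cancel₀ _ hne]
        module
      exact smul_right_injective (EuclideanSpace ℝ (Fin n)) hne this
  have hterm : ∀ i, ‖p • x + q • y - a i‖ ≤ p * ‖x - a i‖ + q * ‖y - a i‖ := by
    intro i
    have hrw : p • x + q • y - a i = p • (x - a i) + q • (y - a i) := by
      have : p • (x - a i) + q • (y - a i) = p • x + q • y - (p + q) • (a i) := by module
      rw [this, hpq, one_smul]
    rw [hrw]
    calc ‖p • (x - a i) + q • (y - a i)‖ ≤ ‖p • (x - a i)‖ + ‖q • (y - a i)‖ := norm_add_le _ _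
    _ = p * ‖x - a i‖ + q * ‖y - a i‖ := by
        rw [norm_smul, norm_smul, Real.norm_of_nonneg hp.le, Real.norm_of_nonneg hq.le]
  have hstrict : ‖p • x + q • y - a i₀‖ < p * ‖x - a i₀‖ + q * ‖y - a i₀‖ := by
    have hrw : p • x + q • y - a i₀ = p • (x - a i₀) + q • (y - a i₀) := by
      have : p • (x - a i₀) + q • (y - a i₀) = p • x + q • y - (p + q) • (a i₀) := by module
      rw [this, hpq, one_smul]
    rw [hrw]
    have hnsr : ¬ SameRay ℝ (p • (x - a i₀)) (q • (y - a i₀)) := by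
      intro hs
      apply hi₀
      have h1 := hs.pos_smul_left (inv_pos.mpr hp)
      rw [smul_smul, inv_mul_cancel₀ (ne_of_gt hp), one_smul] at h1
      have h2 := h1.pos_smul_right (inv_pos.mpr hq)
      rw [smul_smul, inv_mul_cancel₀ (ne_of_gt hq), one_smul] at h2
      exact h2
    have := not_sameRay_iff_norm_add_lt.mp hnsr
    calc ‖p • (x - a i₀) + q • (y - a i₀)‖ < ‖p • (x - a i₀)‖ + ‖q • (y - a i₀)‖ := this
    _ = p * ‖x - a i₀‖ + q * ‖y - a i₀‖ := by
        rw [norm_smul, norm_smul, Real.norm_of_nonneg hp.le, Real.norm_of_nonneg hq.le]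
  calc (∑ i, ‖p • x + q • y - a i‖) < ∑ i, (p * ‖x - a i‖ + q * ‖y - a i‖) := by
        refine Finset.sum_lt_sum (fun i _ => hterm i) ⟨i₀, Finset.mem_univ _, hstrict⟩
  _ = p • ∑ i, ‖x - a i‖ + q • ∑ i, ‖y - a i‖ := by
        rw [Finset.sum_add_distrib, ← Finset.mul_sum, ← Finset.mul_sum]; rfl
end

section
/- If the points a₁, …, a_m in ℝⁿ are not collinear, then the Fermat–Torricelli problem minimize Σᵢ ‖x - aᵢ‖ has a unique optimal solution. -/
/-!
The sum of distances is continuous and tends to infinity at infinity, so it attains its minimum.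
If `x ≠ y` were two minimizers, then so would be their midpoint, which forces equality in every
triangle inequality `‖(x - aᵢ) + (y - aᵢ)‖ ≤ ‖x - aᵢ‖ + ‖y - aᵢ‖`. In a strictly convex space this
means `x - aᵢ` and `y - aᵢ` lie on a common ray, so every `aᵢ` lies on the line through `x` and `y`.
-/

open Filter

theorem collinear_coe_affineSpan_iff {k V P : Type*} [DivisionRing k] [AddCommGroup V]
    [Module k V] [AddTorsor V P] {s : Set P} :
    Collinear k (affineSpan k s : Set P) ↔ Collinear k s := by
  rw [Collinear, Collinear, ← direction_affineSpan k s]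
  rfl

theorem mem_affineSpan_pair_of_sameRay_sub {E : Type*} [AddCommGroup E] [Module ℝ E] {p x y : E}
    (hxy : x ≠ y) (h : SameRay ℝ (x - p) (y - p)) : p ∈ line[ℝ, x, y] := by
  have hcol : Collinear ℝ ({p, x, y} : Set E) := by
    rcases wbtw_total_of_sameRay_vsub_left (x := p) h with h | h
    · exact h.collinear
    · rw [Set.pair_comm]; exact h.collinear
  exact hcol.mem_affineSpan_of_mem_of_ne (by simp) (by simp) (by simp) hxy

section SumNormSub

variable {ι E : Type*} [Fintype ι] [NormedAddCommGroup E]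

theorem tendsto_sum_norm_sub_cocompact [ProperSpace E] [Nonempty ι] (a : ι → E) :
    Tendsto (fun x => ∑ i, ‖x - a i‖) (cocompact E) atTop := by
  obtain ⟨i⟩ := ‹Nonempty ι›
  refine tendsto_atTop_mono (f := fun x => ‖x‖ - ‖a i‖) (fun x => ?_) ?_
  · exact (norm_sub_norm_le x (a i)).trans
      (Finset.single_le_sum (fun j _ => norm_nonneg (x - a j)) (Finset.mem_univ i))
  · exact tendsto_atTop_add_const_right _ _ tendsto_norm_cocompact_atTop

theorem exists_forall_sum_norm_sub_le [ProperSpace E] [Nonempty ι] (a : ι → E) :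
    ∃ x₀, ∀ x, ∑ i, ‖x₀ - a i‖ ≤ ∑ i, ‖x - a i‖ :=
  (by fun_prop : Continuous fun x => ∑ i, ‖x - a i‖).exists_forall_le
    (tendsto_sum_norm_sub_cocompact a)

variable [NormedSpace ℝ E]

theorem norm_midpoint_sub (x y p : E) : ‖midpoint ℝ x y - p‖ = ‖(x - p) + (y - p)‖ / 2 := by
  rw [midpoint_eq_smul_add, show (⅟2 : ℝ) • (x + y) - p = (2⁻¹ : ℝ) • ((x - p) + (y - p)) by
    simp only [invOf_eq_inv]; module, norm_smul]
  norm_num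
  ring

theorem sameRay_sub_of_forall_sum_norm_sub_le [StrictConvexSpace ℝ E] {a : ι → E} {x y : E}
    (hx : ∀ z, ∑ i, ‖x - a i‖ ≤ ∑ i, ‖z - a i‖) (hy : ∑ i, ‖y - a i‖ ≤ ∑ i, ‖x - a i‖)
    (i : ι) : SameRay ℝ (x - a i) (y - a i) := by
  have hle (j : ι) : ‖midpoint ℝ x y - a j‖ ≤ (‖x - a j‖ + ‖y - a j‖) / 2 := by
    rw [norm_midpoint_sub]
    gcongr
    exact norm_add_le _ _
  have hsum : ∑ j, ‖midpoint ℝ x y - a j‖ = ∑ j, (‖x - a j‖ + ‖y - a j‖) / 2 := by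
    refine le_antisymm (Finset.sum_le_sum fun j _ => hle j) ?_
    rw [← Finset.sum_div, Finset.sum_add_distrib]
    linarith [hx (midpoint ℝ x y), hx y]
  have hi := (Finset.sum_eq_sum_iff_of_le fun j _ => hle j).1 hsum i (Finset.mem_univ i)
  rw [norm_midpoint_sub] at hi
  rw [sameRay_iff_norm_add]
  linarith

end SumNormSub

theorem stmt_3 (n m : ℕ) (a : Fin m → EuclideanSpace ℝ (Fin n))
    (h : ¬ Collinear ℝ (Set.range a)) :
    ∃! x₀ : EuclideanSpace ℝ (Fin n), ∀ x, ∑ i, ‖x₀ - a i‖ ≤ ∑ i, ‖x - a i‖ := by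
  have : Nonempty (Fin m) := by
    refine Fin.pos_iff_nonempty.1 (Nat.pos_of_ne_zero ?_)
    rintro rfl
    exact h (by simp [collinear_empty])
  obtain ⟨x₀, hx₀⟩ := exists_forall_sum_norm_sub_le a
  refine ⟨x₀, hx₀, fun y hy => by_contra fun hne => h ?_⟩
  refine (collinear_coe_affineSpan_iff.2 (collinear_pair ℝ y x₀)).subset ?_
  rintro _ ⟨i, rfl⟩
  exact mem_affineSpan_pair_of_sameRay_sub hne
    (sameRay_sub_of_forall_sum_norm_sub_le hy (hx₀ y) i)
end

section
/- Let a₁, a₂, a₃ ∈ ℝⁿ be not collinear and let x̄ ∉ {a₁, a₂, a₃}. Set vᵢ = (x̄ - aᵢ)/‖x̄ - aᵢ‖. Then x̄ minimizes φ(x) = ‖x-a₁‖+‖x-a₂‖+‖x-a₃‖ if and only if ⟨vᵢ, vⱼ⟩ = -1/2 for all i ≠ j. -/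
/-!
Away from the points `aᵢ`, `φ` is differentiable with gradient `∑ vᵢ`, so at a minimiser
`∑ vᵢ = 0` by Fermat's rule. Conversely, `‖u‖ ≥ ‖w‖ + ⟪w / ‖w‖, u - w⟫` (Cauchy–Schwarz) summed over
`w = x̄ - aᵢ`, `u = x - aᵢ` gives `φ x ≥ φ x̄ + ⟪∑ vᵢ, x - x̄⟫`. Finally, three unit vectors sum to
zero iff their pairwise inner products are `-1/2`: pair the sum with each vector, resp. expand
`‖v₁ + v₂ + v₃‖²`.
-/

open RealInnerProductSpace Set

section FermatWeber

variable {E : Type*} [NormedAddCommGroup E] [InnerProductSpace ℝ E]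

theorem norm_inv_norm_smul {w : E} (hw : w ≠ 0) : ‖‖w‖⁻¹ • w‖ = 1 := by
  simpa using norm_smul_inv_norm (𝕜 := ℝ) hw

theorem hasFDerivAt_norm_sub {x c : E} (hx : x ≠ c) :
    HasFDerivAt (fun y => ‖y - c‖) (innerSL ℝ (‖x - c‖⁻¹ • (x - c))) x := by
  have hpos : 0 < ‖x - c‖ := norm_pos_iff.2 (sub_ne_zero.2 hx)
  have h := ((hasFDerivAt_id x).sub_const c).norm_sq.sqrt (by positivity)
  simp only [id, Real.sqrt_sq (norm_nonneg _)] at h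
  convert h using 1
  ext y
  simp only [map_smul, smul_apply, coe_innerSL_apply,
    ContinuousLinearMap.comp_id, smul_eq_mul, nsmul_eq_mul]
  field_simp
  norm_num

theorem norm_add_inner_inv_norm_smul_sub_le {w : E} (hw : w ≠ 0) (u : E) :
    ‖w‖ + ⟪‖w‖⁻¹ • w, u - w⟫ ≤ ‖u‖ := by
  have hcs : ⟪‖w‖⁻¹ • w, u⟫ ≤ ‖u‖ :=
    (real_inner_le_norm _ u).trans_eq (by rw [norm_inv_norm_smul hw, one_mul])
  have hself : ⟪‖w‖⁻¹ • w, w⟫ = ‖w‖ := by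
    rw [real_inner_smul_left, real_inner_self_eq_norm_sq]
    field_simp
  rw [inner_sub_right, hself]
  linarith

variable {ι : Type*} [Fintype ι] {a : ι → E} {x₀ : E}

theorem sum_inv_norm_smul_eq_zero_of_isLocalMin (hx₀ : ∀ i, x₀ ≠ a i)
    (hmin : IsLocalMin (fun x => ∑ i, ‖x - a i‖) x₀) :
    ∑ i, ‖x₀ - a i‖⁻¹ • (x₀ - a i) = 0 := by
  have hderiv : HasFDerivAt (fun x => ∑ i, ‖x - a i‖)
      (innerSL ℝ (∑ i, ‖x₀ - a i‖⁻¹ • (x₀ - a i))) x₀ := by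
    rw [map_sum]
    exact HasFDerivAt.fun_sum fun i _ => hasFDerivAt_norm_sub (hx₀ i)
  exact innerSL_inj.1 (by rw [hmin.hasFDerivAt_eq_zero hderiv, map_zero])

theorem isMinOn_sum_norm_sub_of_sum_inv_norm_smul_eq_zero (hx₀ : ∀ i, x₀ ≠ a i)
    (hsum : ∑ i, ‖x₀ - a i‖⁻¹ • (x₀ - a i) = 0) :
    IsMinOn (fun x => ∑ i, ‖x - a i‖) univ x₀ := by
  refine isMinOn_univ_iff.2 fun x => ?_
  have hsub : ∀ i, ‖x₀ - a i‖ + ⟪‖x₀ - a i‖⁻¹ • (x₀ - a i), x - x₀⟫ ≤ ‖x - a i‖ := by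
    intro i
    simpa using norm_add_inner_inv_norm_smul_sub_le (sub_ne_zero.2 (hx₀ i)) (x - a i)
  calc ∑ i, ‖x₀ - a i‖
      = ∑ i, (‖x₀ - a i‖ + ⟪‖x₀ - a i‖⁻¹ • (x₀ - a i), x - x₀⟫) := by
        rw [Finset.sum_add_distrib, ← sum_inner, hsum, inner_zero_left, add_zero]
    _ ≤ ∑ i, ‖x - a i‖ := Finset.sum_le_sum fun i _ => hsub i

theorem isMinOn_sum_norm_sub_iff (hx₀ : ∀ i, x₀ ≠ a i) :
    IsMinOn (fun x => ∑ i, ‖x - a i‖) univ x₀ ↔ ∑ i, ‖x₀ - a i‖⁻¹ • (x₀ - a i) = 0 :=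
  ⟨fun h => sum_inv_norm_smul_eq_zero_of_isLocalMin hx₀ (h.isLocalMin Filter.univ_mem),
    isMinOn_sum_norm_sub_of_sum_inv_norm_smul_eq_zero hx₀⟩

theorem add_add_eq_zero_iff_inner_eq_neg_half {p q r : E} (hp : ‖p‖ = 1) (hq : ‖q‖ = 1)
    (hr : ‖r‖ = 1) :
    p + q + r = 0 ↔ ⟪p, q⟫ = -(1/2) ∧ ⟪q, r⟫ = -(1/2) ∧ ⟪p, r⟫ = -(1/2) := by
  have hpp : ⟪p, p⟫ = 1 := by rw [real_inner_self_eq_norm_sq, hp, one_pow]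
  have hqq : ⟪q, q⟫ = 1 := by rw [real_inner_self_eq_norm_sq, hq, one_pow]
  have hrr : ⟪r, r⟫ = 1 := by rw [real_inner_self_eq_norm_sq, hr, one_pow]
  have hqp := real_inner_comm p q
  have hrq := real_inner_comm q r
  have hrp := real_inner_comm p r
  constructor
  · intro h
    have hp0 : ⟪p, p + q + r⟫ = 0 := by rw [h, inner_zero_right]
    have hq0 : ⟪q, p + q + r⟫ = 0 := by rw [h, inner_zero_right]
    have hr0 : ⟪r, p + q + r⟫ = 0 := by rw [h, inner_zero_right]
    simp only [inner_add_right] at hp0 hq0 hr0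
    refine ⟨?_, ?_, ?_⟩ <;> linarith
  · rintro ⟨hpq, hqr, hpr⟩
    rw [← inner_self_eq_zero (𝕜 := ℝ)]
    simp only [inner_add_left, inner_add_right]
    linarith

theorem sum_fin_three_eq_zero_iff_inner_eq_neg_half {v : Fin 3 → E} (hv : ∀ i, ‖v i‖ = 1) :
    ∑ i, v i = 0 ↔ ∀ i j, i ≠ j → ⟪v i, v j⟫ = -(1/2) := by
  rw [Fin.sum_univ_three, add_add_eq_zero_iff_inner_eq_neg_half (hv 0) (hv 1) (hv 2)]
  constructor
  · rintro ⟨h01, h12, h02⟩ i j hij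
    fin_cases i <;> fin_cases j <;>
      first | exact (hij rfl).elim | assumption | (rw [real_inner_comm]; assumption)
  · intro h
    exact ⟨h 0 1 (by decide), h 1 2 (by decide), h 0 2 (by decide)⟩

end FermatWeber

theorem stmt_10_general (n : ℕ) (a : Fin 3 → EuclideanSpace ℝ (Fin n))
    (x₀ : EuclideanSpace ℝ (Fin n)) (hx₀ : ∀ i, x₀ ≠ a i) :
    (∀ x, ∑ i, ‖x₀ - a i‖ ≤ ∑ i, ‖x - a i‖) ↔
      ∀ i j, i ≠ j →
        (inner ℝ (‖x₀ - a i‖⁻¹ • (x₀ - a i)) (‖x₀ - a j‖⁻¹ • (x₀ - a j)) : ℝ) = -(1/2) := by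
  have hunit : ∀ i, ‖‖x₀ - a i‖⁻¹ • (x₀ - a i)‖ = 1 := fun i =>
    norm_inv_norm_smul (sub_ne_zero.2 (hx₀ i))
  exact (isMinOn_univ_iff (f := fun x => ∑ i, ‖x - a i‖)).symm.trans <|
    (isMinOn_sum_norm_sub_iff hx₀).trans (sum_fin_three_eq_zero_iff_inner_eq_neg_half hunit)

theorem stmt_10 (n : ℕ) (a : Fin 3 → EuclideanSpace ℝ (Fin n))
    (hcol : ¬ Collinear ℝ (Set.range a))
    (x₀ : EuclideanSpace ℝ (Fin n)) (hx₀ : ∀ i, x₀ ≠ a i) :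
    (∀ x, ∑ i, ‖x₀ - a i‖ ≤ ∑ i, ‖x - a i‖) ↔
      ∀ i j, i ≠ j →
        (inner ℝ (‖x₀ - a i‖⁻¹ • (x₀ - a i)) (‖x₀ - a j‖⁻¹ • (x₀ - a j)) : ℝ) = -(1/2) :=
  stmt_10_general n a x₀ hx₀
end

section
/- Let a₁, a₂, a₃ ∈ ℝⁿ with a₂ ≠ a₁ ≠ a₃, and set v₂ = (a₁ - a₂)/‖a₁ - a₂‖, v₃ = (a₁ - a₃)/‖a₁ - a₃‖. Then a₁ minimizes φ(x) = ‖x-a₁‖+‖x-a₂‖+‖x-a₃‖ if and only if ⟨v₂, v₃⟩ ≤ -1/2. -/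
/-!
Write `u = a₁ - a₂`, `w = a₁ - a₃`, `y = x - a₁` and `s = v₂ + v₃`; for unit vectors `v₂, v₃`,
`‖s‖ ≤ 1` is the same as `⟪v₂, v₃⟫ ≤ -1/2`.

If `‖s‖ ≤ 1`, Cauchy–Schwarz gives `‖y + u‖ ≥ ⟪v₂, y⟫ + ‖u‖`, `‖y + w‖ ≥ ⟪v₃, y⟫ + ‖w‖` and
`‖y‖ ≥ -⟪s, y⟫`, which add up to `φ(x) ≥ φ(a₁)`.

If `‖s‖ > 1`, moving from `a₁` by `-t s` changes `φ` by `t (‖s‖ - ‖s‖²) + O(t²)`, which is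
negative for small `t > 0`.
-/

open RealInnerProductSpace

section

variable {E : Type*} [NormedAddCommGroup E] [InnerProductSpace ℝ E]

lemma norm_add_le_norm_add_div {y : E} (hy : y ≠ 0) (d : E) :
    ‖y + d‖ ≤ ‖y‖ + (2 * ⟪y, d⟫ + ‖d‖ ^ 2) / (2 * ‖y‖) := by
  have hpos : 0 < ‖y‖ := norm_pos_iff.mpr hy
  rw [← sub_le_iff_le_add', le_div_iff₀ (by positivity)]
  nlinarith [norm_add_sq_real y d, sq_nonneg (‖y + d‖ - ‖y‖)]

lemma real_inner_inv_norm_smul_self {u : E} (hu : u ≠ 0) : ⟪‖u‖⁻¹ • u, u⟫ = ‖u‖ := by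
  have hpos : 0 < ‖u‖ := norm_pos_iff.mpr hu
  rw [real_inner_smul_left, real_inner_self_eq_norm_sq]
  field_simp

lemma norm_add_le_one_iff_inner_le {v₂ v₃ : E} (h₂ : ‖v₂‖ = 1) (h₃ : ‖v₃‖ = 1) :
    ‖v₂ + v₃‖ ≤ 1 ↔ ⟪v₂, v₃⟫ ≤ -(1 / 2) := by
  have hsq := norm_add_sq_real v₂ v₃
  rw [h₂, h₃] at hsq
  rw [← sq_le_one_iff₀ (norm_nonneg _)]
  constructor <;> intro h <;> linarith

lemma norm_inv_norm_smul_self {u : E} (hu : u ≠ 0) : ‖‖u‖⁻¹ • u‖ = 1 :=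
  norm_smul_inv_norm hu

lemma inner_add_norm_le_norm_add {u : E} (hu : u ≠ 0) (y : E) :
    ⟪‖u‖⁻¹ • u, y⟫ + ‖u‖ ≤ ‖y + u‖ := by
  calc ⟪‖u‖⁻¹ • u, y⟫ + ‖u‖ = ⟪‖u‖⁻¹ • u, y + u⟫ := by
        rw [inner_add_right, real_inner_inv_norm_smul_self hu]
    _ ≤ ‖‖u‖⁻¹ • u‖ * ‖y + u‖ := real_inner_le_norm _ _
    _ = ‖y + u‖ := by rw [norm_inv_norm_smul_self hu, one_mul]

lemma norm_add_norm_le_of_norm_add_le_one {u w : E} (hu : u ≠ 0) (hw : w ≠ 0)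
    (h : ‖‖u‖⁻¹ • u + ‖w‖⁻¹ • w‖ ≤ 1) (y : E) :
    ‖u‖ + ‖w‖ ≤ ‖y‖ + ‖y + u‖ + ‖y + w‖ := by
  have hy : -⟪‖u‖⁻¹ • u + ‖w‖⁻¹ • w, y⟫ ≤ ‖y‖ :=
    calc -⟪‖u‖⁻¹ • u + ‖w‖⁻¹ • w, y⟫ ≤ ‖‖u‖⁻¹ • u + ‖w‖⁻¹ • w‖ * ‖y‖ :=
          (neg_le_abs _).trans (abs_real_inner_le_norm _ _)
      _ ≤ ‖y‖ := mul_le_of_le_one_left (norm_nonneg y) h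
  rw [inner_add_left] at hy
  linarith [inner_add_norm_le_norm_add hu y, inner_add_norm_le_norm_add hw y]

lemma exists_mul_add_mul_sq_neg {a b : ℝ} (ha : a < 0) (hb : 0 < b) :
    ∃ t : ℝ, 0 < t ∧ a * t + b * t ^ 2 < 0 :=
  ⟨-a / (2 * b), div_pos (neg_pos.mpr ha) (by positivity), by
    field_simp
    nlinarith⟩

lemma exists_norm_add_lt_of_one_lt_norm_add {u w : E} (hu : u ≠ 0) (hw : w ≠ 0)
    (h : 1 < ‖‖u‖⁻¹ • u + ‖w‖⁻¹ • w‖) :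
    ∃ y, ‖y‖ + ‖y + u‖ + ‖y + w‖ < ‖u‖ + ‖w‖ := by
  set s := ‖u‖⁻¹ • u + ‖w‖⁻¹ • w
  have hnu : 0 < ‖u‖ := norm_pos_iff.mpr hu
  have hnw : 0 < ‖w‖ := norm_pos_iff.mpr hw
  obtain ⟨t, ht, hneg⟩ := exists_mul_add_mul_sq_neg (a := ‖s‖ - ‖s‖ ^ 2)
    (b := ‖s‖ ^ 2 / (2 * ‖u‖) + ‖s‖ ^ 2 / (2 * ‖w‖)) (by nlinarith) (by positivity)
  refine ⟨-(t • s), ?_⟩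
  have hsum : ⟪u, s⟫ / ‖u‖ + ⟪w, s⟫ / ‖w‖ = ‖s‖ ^ 2 := by
    rw [← real_inner_self_eq_norm_sq]
    simp only [s, inner_add_left, real_inner_smul_left]
    ring
  have bound (v : E) (hv : v ≠ 0) :
      ‖-(t • s) + v‖ ≤ ‖v‖ - t * (⟪v, s⟫ / ‖v‖) + ‖s‖ ^ 2 / (2 * ‖v‖) * t ^ 2 := by
    have hnv : 0 < ‖v‖ := norm_pos_iff.mpr hv
    have := norm_add_le_norm_add_div hv (-(t • s))
    rw [add_comm, norm_neg, norm_smul, Real.norm_of_nonneg ht.le, inner_neg_right,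
      real_inner_smul_right] at this
    convert this using 1
    field_simp
    ring
  have hdecrease : t * (⟪u, s⟫ / ‖u‖) + t * (⟪w, s⟫ / ‖w‖) = t * ‖s‖ ^ 2 := by
    rw [← mul_add, hsum]
  rw [norm_neg, norm_smul, Real.norm_of_nonneg ht.le]
  linarith [bound u hu, bound w hw]

theorem forall_norm_add_le_iff {u w : E} (hu : u ≠ 0) (hw : w ≠ 0) :
    (∀ y, ‖u‖ + ‖w‖ ≤ ‖y‖ + ‖y + u‖ + ‖y + w‖) ↔ ⟪‖u‖⁻¹ • u, ‖w‖⁻¹ • w⟫ ≤ -(1 / 2) := by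
  rw [← norm_add_le_one_iff_inner_le (norm_inv_norm_smul_self hu) (norm_inv_norm_smul_self hw)]
  refine ⟨fun h => ?_, norm_add_norm_le_of_norm_add_le_one hu hw⟩
  by_contra! hlt
  obtain ⟨y, hy⟩ := exists_norm_add_lt_of_one_lt_norm_add hu hw hlt
  exact (h y).not_gt hy

end

theorem stmt_11 (n : ℕ) (a₁ a₂ a₃ : EuclideanSpace ℝ (Fin n))
    (h2 : a₂ ≠ a₁) (h3 : a₃ ≠ a₁) :
    (∀ x, ‖a₁ - a₁‖ + ‖a₁ - a₂‖ + ‖a₁ - a₃‖ ≤ ‖x - a₁‖ + ‖x - a₂‖ + ‖x - a₃‖) ↔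
      (inner ℝ (‖a₁ - a₂‖⁻¹ • (a₁ - a₂)) (‖a₁ - a₃‖⁻¹ • (a₁ - a₃)) : ℝ) ≤ -(1/2) := by
  rw [← forall_norm_add_le_iff (sub_ne_zero.mpr h2.symm) (sub_ne_zero.mpr h3.symm)]
  refine (Equiv.subRight a₁).forall_congr fun x => ?_
  simp only [Equiv.subRight_apply, sub_add_sub_cancel, sub_self, norm_zero, zero_add]
end

section
/- Let a₁,…,a_m ∈ ℝⁿ, x ∉ {a₁,…,a_m}, φ(x) = Σᵢ ‖x - aᵢ‖, and F(x) = (Σᵢ aᵢ/‖x-aᵢ‖)/(Σᵢ 1/‖x-aᵢ‖). If F(x) ≠ x, then φ(F(x)) < φ(x). -/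
/-!
The point `F(x)` is the minimiser of the quadratic majorant
`g(y) = ∑ ‖y - aᵢ‖² / ‖x - aᵢ‖` of the objective `φ`. By the parallel-axis identity for the
weighted barycentre, `g(x) = g(F(x)) + (∑ 1/‖x - aᵢ‖) ‖x - F(x)‖²`, and `g(x) = φ(x)`, so
`g(F(x)) < φ(x)` when `F(x) ≠ x`. Termwise AM-GM gives `φ(y) ≤ (g(y) + φ(x)) / 2`,
hence `φ(F(x)) < φ(x)`.
-/

open Finset
open scoped RealInnerProductSpace

section ParallelAxis

variable {ι E : Type*} [Fintype ι] [NormedAddCommGroup E] [InnerProductSpace ℝ E]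

theorem sum_smul_sub_eq_zero_of_eq_inv_smul_sum (w : ι → ℝ) (a : ι → E) {c : E}
    (hw : ∑ i, w i ≠ 0) (hc : c = (∑ i, w i)⁻¹ • ∑ i, w i • a i) :
    ∑ i, w i • (c - a i) = 0 := by
  have hsum : (∑ i, w i) • c = ∑ i, w i • a i := by
    rw [hc, smul_smul, mul_inv_cancel₀ hw, one_smul]
  simp_rw [smul_sub]
  rw [sum_sub_distrib, ← sum_smul, hsum, sub_self]

theorem sum_mul_norm_sub_sq_eq_of_sum_smul_sub_eq_zero (w : ι → ℝ) (a : ι → E) {c : E}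
    (hc : ∑ i, w i • (c - a i) = 0) (x : E) :
    ∑ i, w i * ‖x - a i‖ ^ 2 = (∑ i, w i) * ‖x - c‖ ^ 2 + ∑ i, w i * ‖c - a i‖ ^ 2 := by
  have hcross : ∑ i, w i * ⟪x - c, c - a i⟫ = 0 := by
    simp_rw [← real_inner_smul_right]
    rw [← inner_sum, hc, inner_zero_right]
  have hexpand : ∀ i, w i * ‖x - a i‖ ^ 2 =
      w i * ‖x - c‖ ^ 2 + 2 * (w i * ⟪x - c, c - a i⟫) + w i * ‖c - a i‖ ^ 2 := by
    intro i
    rw [← sub_add_sub_cancel x c (a i), norm_add_sq_real]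
    ring
  rw [sum_congr rfl fun i _ => hexpand i, sum_add_distrib, sum_add_distrib, ← sum_mul,
    ← mul_sum, hcross, mul_zero, add_zero]

end ParallelAxis

theorem le_inv_mul_sq_add_div_two {t d : ℝ} (hd : 0 < d) : t ≤ (d⁻¹ * t ^ 2 + d) / 2 := by
  have h := two_mul_le_add_sq t d
  rw [le_div_iff₀ two_pos, inv_mul_eq_div, div_add' _ _ _ hd.ne', le_div_iff₀ hd]
  nlinarith

noncomputable def weiszfeld {ι E : Type*} [Fintype ι] [NormedAddCommGroup E]
    [InnerProductSpace ℝ E] (a : ι → E) (x : E) : E :=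
  (∑ i, ‖x - a i‖⁻¹)⁻¹ • ∑ i, ‖x - a i‖⁻¹ • a i

theorem sum_norm_sub_weiszfeld_lt {ι E : Type*} [Fintype ι] [Nonempty ι] [NormedAddCommGroup E]
    [InnerProductSpace ℝ E] (a : ι → E) {x : E} (hx : x ∉ Set.range a)
    (hne : weiszfeld a x ≠ x) :
    ∑ i, ‖weiszfeld a x - a i‖ < ∑ i, ‖x - a i‖ := by
  set F := weiszfeld a x
  have hdist : ∀ i, 0 < ‖x - a i‖ := fun i =>
    norm_pos_iff.2 (sub_ne_zero.2 fun h => hx ⟨i, h.symm⟩)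
  have hW : 0 < ∑ i, ‖x - a i‖⁻¹ := sum_pos (fun i _ => inv_pos.2 (hdist i)) univ_nonempty
  have hmajorant_x : ∑ i, ‖x - a i‖⁻¹ * ‖x - a i‖ ^ 2 = ∑ i, ‖x - a i‖ :=
    sum_congr rfl fun i _ => by rw [sq, ← mul_assoc, inv_mul_cancel₀ (hdist i).ne', one_mul]
  have hmajorant_F : ∑ i, ‖x - a i‖⁻¹ * ‖F - a i‖ ^ 2 < ∑ i, ‖x - a i‖ := by
    rw [← hmajorant_x, sum_mul_norm_sub_sq_eq_of_sum_smul_sub_eq_zero _ a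
      (sum_smul_sub_eq_zero_of_eq_inv_smul_sum (c := F) _ a hW.ne' rfl) x]
    have : 0 < (∑ i, ‖x - a i‖⁻¹) * ‖x - F‖ ^ 2 :=
      mul_pos hW (pow_pos (norm_pos_iff.2 (sub_ne_zero.2 hne.symm)) 2)
    linarith
  calc ∑ i, ‖F - a i‖ ≤ ∑ i, (‖x - a i‖⁻¹ * ‖F - a i‖ ^ 2 + ‖x - a i‖) / 2 :=
        sum_le_sum fun i _ => le_inv_mul_sq_add_div_two (hdist i)
    _ = ((∑ i, ‖x - a i‖⁻¹ * ‖F - a i‖ ^ 2) + ∑ i, ‖x - a i‖) / 2 := by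
        rw [← sum_div, sum_add_distrib]
    _ < ∑ i, ‖x - a i‖ := by linarith

theorem stmt_15 (n m : ℕ) (hm : 0 < m) (a : Fin m → EuclideanSpace ℝ (Fin n))
    (x : EuclideanSpace ℝ (Fin n)) (hx : x ∉ Set.range a)
    (F : EuclideanSpace ℝ (Fin n))
    (hF : F = (∑ i, ‖x - a i‖⁻¹)⁻¹ • ∑ i, ‖x - a i‖⁻¹ • a i)
    (hne : F ≠ x) :
    ∑ i, ‖F - a i‖ < ∑ i, ‖x - a i‖ := by
  have : Nonempty (Fin m) := ⟨⟨0, hm⟩⟩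
  subst hF
  exact sum_norm_sub_weiszfeld_lt a hx hne
end

section
/- For points x, a₁,…,a_m in ℝⁿ with x ∉ {a₁,…,a_m}, and F(x) = (Σᵢ aᵢ/‖x-aᵢ‖)/(Σᵢ 1/‖x-aᵢ‖), the identity Σᵢ ‖F(x) - aᵢ‖²/‖x - aᵢ‖ = φ(x) + 2(φ(F(x)) - φ(x)) + Σᵢ (‖F(x)-aᵢ‖ - ‖x-aᵢ‖)²/‖x-aᵢ‖ holds, where φ(x) = Σᵢ ‖x-aᵢ‖. -/
theorem stmt_16 (n m : ℕ) (a : Fin m → EuclideanSpace ℝ (Fin n))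
    (x : EuclideanSpace ℝ (Fin n)) (hx : x ∉ Set.range a)
    (F : EuclideanSpace ℝ (Fin n))
    (hF : F = (∑ i, ‖x - a i‖⁻¹)⁻¹ • ∑ i, ‖x - a i‖⁻¹ • a i) :
    ∑ i, ‖F - a i‖ ^ 2 / ‖x - a i‖ =
      (∑ i, ‖x - a i‖) + 2 * ((∑ i, ‖F - a i‖) - ∑ i, ‖x - a i‖) +
        ∑ i, (‖F - a i‖ - ‖x - a i‖) ^ 2 / ‖x - a i‖ := by
  have h : ∀ i, ‖x - a i‖ ≠ 0 := by
    intro i h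
    exact hx ⟨i, (sub_eq_zero.mp (norm_eq_zero.mp h)).symm⟩
  have key : ∑ i, ‖F - a i‖ ^ 2 / ‖x - a i‖ =
      ∑ i, (‖x - a i‖ + 2 * (‖F - a i‖ - ‖x - a i‖) +
        (‖F - a i‖ - ‖x - a i‖) ^ 2 / ‖x - a i‖) := by
    refine Finset.sum_congr rfl fun i _ => ?_
    field_simp [h i]
    ring
  rw [key]
  simp only [Finset.sum_add_distrib, Finset.mul_sum, mul_sub, Finset.sum_sub_distrib]
end

section
/- Let a₁,…,a_m ∈ ℝⁿ be not collinear and define R_k = Σ_{i≠k} (aᵢ - a_k)/‖aᵢ - a_k‖. The vertex a_k is the optimal solution of minimizing φ(x) = Σᵢ ‖x - aᵢ‖ if and only if ‖R_k‖ ≤ 1. -/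
/-!
Splitting off the `k`-th term, `a k` minimises `φ` iff `f (a k) ≤ f x + ‖x - a k‖` for all `x`,
where `f = ∑_{i ≠ k} ‖· - a i‖`. Since the points are distinct, `f` is differentiable at `a k` with
gradient `-R_k`, and by convexity of the norm this gradient is also a subgradient. For such an `f`
the inequality holds iff the gradient has norm at most `1`: sufficiency is Cauchy–Schwarz, and
necessity is Fermat's rule for the one-sided minimum of `t ↦ f (a k + t • y) + t * ‖y‖` at `t = 0`.
-/

open Finset

section InnerProductSpace

variable {E : Type*} [NormedAddCommGroup E] [InnerProductSpace ℝ E]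

theorem hasFDerivAt_norm_of_ne_zero {y : E} (hy : y ≠ 0) :
    HasFDerivAt (‖·‖) (innerSL ℝ (‖y‖⁻¹ • y)) y := by
  have h := (hasStrictFDerivAt_norm_sq y).hasFDerivAt.sqrt (by positivity)
  simp only [Real.sqrt_sq (norm_nonneg _)] at h
  have hy' : ‖y‖ ≠ 0 := norm_ne_zero_iff.mpr hy
  refine h.congr_fderiv ?_
  ext z
  simp only [one_div, mul_inv_rev, smul_apply, coe_innerSL_apply, nsmul_eq_mul, Nat.cast_ofNat,
    smul_eq_mul, map_smul]
  field_simp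

theorem norm_add_inner_le_norm_add {y : E} (hy : y ≠ 0) (z : E) :
    ‖y‖ + inner ℝ (‖y‖⁻¹ • y) z ≤ ‖y + z‖ := by
  have hu : ‖‖y‖⁻¹ • y‖ = 1 := norm_smul_inv_norm hy
  calc ‖y‖ + inner ℝ (‖y‖⁻¹ • y) z = inner ℝ (‖y‖⁻¹ • y) (y + z) := by
        simp only [inner_add_right, real_inner_smul_left, real_inner_self_eq_norm_sq]
        field_simp
    _ ≤ ‖y + z‖ := by simpa [hu] using real_inner_le_norm (‖y‖⁻¹ • y) (y + z)

end InnerProductSpace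

section NormedSpace

variable {F : Type*} [NormedAddCommGroup F] [NormedSpace ℝ F] {f : F → ℝ} {f' : F →L[ℝ] ℝ}
  {c : F}

theorem HasFDerivAt.neg_norm_le_of_forall_le_add_norm_sub (hf : HasFDerivAt f f' c)
    (hmin : ∀ x, f c ≤ f x + ‖x - c‖) (y : F) : -‖y‖ ≤ f' y := by
  set φ : ℝ → ℝ := fun t => f (c + t • y) + t * ‖y‖
  have hφ : HasDerivAt φ (f' y + ‖y‖) 0 := by
    have hline : HasDerivAt (fun t : ℝ => c + t • y) y 0 :=
      ((hasDerivAt_id 0).smul_const y).const_add c |>.congr_deriv (one_smul ℝ y)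
    exact (hf.comp_hasDerivAt_of_eq 0 hline (by simp)).add ((hasDerivAt_id 0).mul_const ‖y‖)
      |>.congr_deriv (by simp)
  have hφmin : IsLocalMinOn φ (Set.Ici 0) 0 := by
    refine Filter.eventually_of_mem self_mem_nhdsWithin fun t (ht : 0 ≤ t) => ?_
    simpa only [φ, zero_smul, add_zero, zero_mul, add_sub_cancel_left, norm_smul,
      Real.norm_of_nonneg ht] using hmin (c + t • y)
  have hone : (1 : ℝ) ∈ posTangentConeAt (Set.Ici 0) 0 :=
    mem_posTangentConeAt_of_segment_subset (by simp [segment_eq_Icc, Set.Icc_subset_Ici_self])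
  have hslope := hφmin.hasFDerivWithinAt_nonneg hφ.hasFDerivAt.hasFDerivWithinAt hone
  simp only [ContinuousLinearMap.toSpanSingleton_apply, smul_eq_mul, one_mul] at hslope
  linarith

theorem HasFDerivAt.norm_le_one_of_forall_le_add_norm_sub (hf : HasFDerivAt f f' c)
    (hmin : ∀ x, f c ≤ f x + ‖x - c‖) : ‖f'‖ ≤ 1 := by
  refine f'.opNorm_le_bound zero_le_one fun y => ?_
  rw [one_mul, Real.norm_eq_abs, abs_le]
  have hneg := hf.neg_norm_le_of_forall_le_add_norm_sub hmin (-y)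
  rw [norm_neg, map_neg] at hneg
  exact ⟨hf.neg_norm_le_of_forall_le_add_norm_sub hmin y, by linarith⟩

theorem HasFDerivAt.forall_le_add_norm_sub_iff (hf : HasFDerivAt f f' c)
    (hsub : ∀ x, f c + f' (x - c) ≤ f x) : (∀ x, f c ≤ f x + ‖x - c‖) ↔ ‖f'‖ ≤ 1 := by
  refine ⟨hf.norm_le_one_of_forall_le_add_norm_sub, fun h x => ?_⟩
  have hlin : -‖x - c‖ ≤ f' (x - c) := calc
    -‖x - c‖ ≤ -(‖f'‖ * ‖x - c‖) := neg_le_neg (mul_le_of_le_one_left (norm_nonneg _) h)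
    _ ≤ f' (x - c) := neg_le_of_abs_le (f'.le_opNorm (x - c))
  linarith [hsub x]

end NormedSpace

section SumOfDistances

variable {E : Type*} [NormedAddCommGroup E] [InnerProductSpace ℝ E] {ι : Type*} {s : Finset ι}
  {p : ι → E} {c : E}

theorem hasFDerivAt_sum_norm_sub (hc : ∀ i ∈ s, c ≠ p i) :
    HasFDerivAt (fun x => ∑ i ∈ s, ‖x - p i‖)
      (innerSL ℝ (∑ i ∈ s, ‖c - p i‖⁻¹ • (c - p i))) c := by
  rw [map_sum]
  exact HasFDerivAt.fun_sum fun i hi =>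
    ((hasFDerivAt_norm_of_ne_zero (sub_ne_zero.mpr (hc i hi))).comp c
      (hasFDerivAt_sub_const (p i))).congr_fderiv (ContinuousLinearMap.comp_id _)

theorem sum_norm_sub_add_inner_le (hc : ∀ i ∈ s, c ≠ p i) (x : E) :
    ∑ i ∈ s, ‖c - p i‖ + inner ℝ (∑ i ∈ s, ‖c - p i‖⁻¹ • (c - p i)) (x - c)
      ≤ ∑ i ∈ s, ‖x - p i‖ := by
  rw [sum_inner, ← sum_add_distrib]
  refine sum_le_sum fun i hi => ?_
  simpa using norm_add_inner_le_norm_add (sub_ne_zero.mpr (hc i hi)) (x - c)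

theorem forall_sum_norm_sub_le_iff (hc : ∀ i ∈ s, c ≠ p i) :
    (∀ x, ∑ i ∈ s, ‖c - p i‖ ≤ ∑ i ∈ s, ‖x - p i‖ + ‖x - c‖) ↔
      ‖∑ i ∈ s, ‖p i - c‖⁻¹ • (p i - c)‖ ≤ 1 := by
  have hR : ∑ i ∈ s, ‖p i - c‖⁻¹ • (p i - c) = -∑ i ∈ s, ‖c - p i‖⁻¹ • (c - p i) := by
    simp only [← sum_neg_distrib, ← smul_neg, neg_sub, norm_sub_rev (p _)]
  rw [hR, norm_neg, ← innerSL_apply_norm ℝ]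
  exact (hasFDerivAt_sum_norm_sub hc).forall_le_add_norm_sub_iff (sum_norm_sub_add_inner_le hc)

end SumOfDistances

theorem stmt_17_general (n m : ℕ) (a : Fin m → EuclideanSpace ℝ (Fin n))
    (hdist : Function.Injective a) (k : Fin m) :
    (∀ x, ∑ i, ‖a k - a i‖ ≤ ∑ i, ‖x - a i‖) ↔
      ‖∑ i ∈ Finset.univ.erase k, ‖a i - a k‖⁻¹ • (a i - a k)‖ ≤ 1 := by
  have hk : ∀ i ∈ univ.erase k, a k ≠ a i := fun i hi => hdist.ne (ne_of_mem_erase hi).symm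
  rw [← forall_sum_norm_sub_le_iff hk]
  simp only [← add_sum_erase univ _ (mem_univ k), sub_self, norm_zero, zero_add, add_comm]

theorem stmt_17 (n m : ℕ) (a : Fin m → EuclideanSpace ℝ (Fin n))
    (hcol : ¬ Collinear ℝ (Set.range a))
    (hdist : Function.Injective a) (k : Fin m) :
    (∀ x, ∑ i, ‖a k - a i‖ ≤ ∑ i, ‖x - a i‖) ↔
      ‖∑ i ∈ Finset.univ.erase k, ‖a i - a k‖⁻¹ • (a i - a k)‖ ≤ 1 :=
  stmt_17_general n m a hdist k
end
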